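/- Let E be the row-finite graph with vertex set E⁰ = {a} ∪ {pₙ : n ∈ ℕ} and, for each n ∈ ℕ, exactly one edge from pₙ to pₙ₊₁ and one edge from pₙ to a (the vertex a emits no edges); thus M_E is the abelian monoid with generators a, p₀, p₁, … and relations pₙ = pₙ₊₁ + a for all n ≥ 0. Then M_E is not primely generated; indeed, the only prime element of M_E is the class of a (together with 0). -/

import Mathlib

/-- A row-finite directed graph: vertex set `V`, edge set `Edge`,
source and range maps, with every vertex emitting finitely many edges. -/
structure RFGraph where
  V : Type
  Edge : Type
  s : Edge → V
  r : Edge → V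
  rowFinite : ∀ v : V, {e : Edge | s e = v}.Finite

namespace RFGraph

/-- The free abelian monoid on the vertex set. -/
abbrev F (G : RFGraph) : Type := G.V →₀ ℕ

/-- `v` emits at least one edge. -/
def emits (G : RFGraph) (v : G.V) : Prop := ∃ e : G.Edge, G.s e = v

/-- `𝐫(v) = Σ_{e ∈ s⁻¹(v)} r(e)` in the free abelian monoid. -/
noncomputable def rr (G : RFGraph) (v : G.V) : G.F :=
  ∑ e ∈ (G.rowFinite v).toFinset, Finsupp.single (G.r e) 1

/-- The one-step relation `→₁`: `α →₁ β` iff `α = x + α'` for a vertex `x`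
emitting at least one edge, and `β = 𝐫(x) + α'`. -/
def step (G : RFGraph) (α β : G.F) : Prop :=
  ∃ (x : G.V) (α' : G.F), G.emits x ∧ α = Finsupp.single x 1 + α' ∧ β = G.rr x + α'

/-- The reflexive-transitive closure `→` of `→₁`. -/
def steps (G : RFGraph) : G.F → G.F → Prop := Relation.ReflTransGen G.step

/-- The additive congruence `∼` on `F_E` generated by `→₁`. -/
noncomputable def graphCon (G : RFGraph) : AddCon G.F := addConGen G.step

/-- The graph monoid `M_E = F_E/∼`. -/
abbrev M (G : RFGraph) : Type := G.graphCon.Quotient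

/-- The class `a_v` of a vertex `v` in the graph monoid. -/
noncomputable def av (G : RFGraph) (v : G.V) : G.M := G.graphCon.mk' (Finsupp.single v 1)

end RFGraph

namespace RFGraph

/-- The algebraic pre-order on the graph monoid: `x ≤ y` iff `∃ z, y = x + z`. -/
def mle (G : RFGraph) (x y : G.M) : Prop := ∃ z : G.M, y = x + z

/-- A prime element of the graph monoid. -/
def IsPrime (G : RFGraph) (p : G.M) : Prop :=
  ∀ a₁ a₂ : G.M, G.mle p (a₁ + a₂) → G.mle p a₁ ∨ G.mle p a₂

end RFGraph

/-- The graph with vertices `a` (= `none`) and `pₙ` (= `some n`), where for each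
`n` there is exactly one edge `pₙ → pₙ₊₁` (the edge `(n, true)`) and exactly one
edge `pₙ → a` (the edge `(n, false)`), and `a` emits no edges. -/
def exGraph : RFGraph where
  V := Option ℕ
  Edge := ℕ × Bool
  s := fun e => some e.1
  r := fun e => if e.2 then some (e.1 + 1) else none
  rowFinite := fun v => by
    match v with
    | none =>
        convert Set.finite_empty
        ext e
        simp [Set.mem_setOf_eq]
    | some n =>
        apply Set.Finite.subset (s := {(n, true), (n, false)})
          (Set.toFinite _)
        rintro ⟨m, b⟩ hm
        simp only [Set.mem_setOf_eq, Option.some.injEq] at hm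
        cases b <;> simp [hm]


/-!
Two additive functions on the generators respect the relations `pₙ = pₙ₊₁ + a` and hence
descend to `M_E`: the number of `p`'s (`a ↦ 0`, `pₙ ↦ 1`) and the weight `a ↦ 1`, `pₙ ↦ -n`.
If `x ≤ y` and both have the same number of `p`'s, then `y = x + k • a`, so the weight of `x`
is at most that of `y`.

Every element is either `k • a` or `pₙ + y`. Since `pₙ = pₙ₊₁ + a`, every nonzero element lies
above `a`, which makes `a` prime. The element `(k + 2) • a = a + (k + 1) • a` lies below neither
summand, because its weight is larger than theirs. Similarly `pₙ + y = (pₙ₊₁ + y) + a` lies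
neither below `a`, which has fewer `p`'s, nor below `pₙ₊₁ + y`, which has smaller weight. So the
primes are `0` and `a`, which contain no `p`, and therefore `p₀` is not a sum of primes.
-/

namespace RFGraph

variable (G : RFGraph)

theorem av_eq_mk'_rr {v : G.V} (hv : G.emits v) : G.av v = G.graphCon.mk' (G.rr v) :=
  (AddCon.eq _).mpr <| AddConGen.Rel.of _ _ ⟨v, 0, hv, (add_zero _).symm, (add_zero _).symm⟩

theorem toFinset_rowFinite_eq_pair [DecidableEq G.Edge] {v : G.V} {e₁ e₂ : G.Edge}
    (h : ∀ e, G.s e = v ↔ e = e₁ ∨ e = e₂) : (G.rowFinite v).toFinset = {e₁, e₂} := by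
  ext e
  rw [Set.Finite.mem_toFinset, Set.mem_setOf_eq, h, Finset.mem_insert, Finset.mem_singleton]

variable {G} {A : Type*} [AddCommMonoid A]

noncomputable def weightHom (w : G.V → A)
    (hw : ∀ v, G.emits v → w v = ∑ e ∈ (G.rowFinite v).toFinset, w (G.r e)) : G.M →+ A :=
  G.graphCon.lift (Finsupp.liftAddHom fun v => multiplesHom A (w v)) <|
    AddCon.addConGen_le.mpr fun _ _ ⟨x, α', hx, hα, hβ⟩ => by
      have hsingle : ∀ u, Finsupp.liftAddHom (fun v => multiplesHom A (w v))
          (Finsupp.single u 1) = w u := by simp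
      rw [AddCon.ker_rel, hα, hβ, map_add, map_add, rr, map_sum, hsingle, hw x hx]
      simp only [hsingle]

@[simp]
theorem weightHom_av (w : G.V → A)
    (hw : ∀ v, G.emits v → w v = ∑ e ∈ (G.rowFinite v).toFinset, w (G.r e)) (v : G.V) :
    weightHom w hw (G.av v) = w v := by
  unfold weightHom av
  exact (AddCon.lift_mk' _ _).trans (by simp)

@[elab_as_elim]
theorem induction_on {P : G.M → Prop} (x : G.M) (zero : P 0)
    (av_add : ∀ v x, P x → P (G.av v + x)) : P x := by
  obtain ⟨γ, rfl⟩ := AddCon.mk'_surjective x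
  induction γ using Finsupp.induction with
  | zero => exact zero
  | single_add v b γ _ hb ih =>
    clear hb
    induction b with
    | zero => simpa using ih
    | succ b ihb =>
      rw [add_comm b 1, Finsupp.single_add, add_assoc, map_add]
      exact av_add v _ ihb

theorem isPrime_zero : G.IsPrime 0 :=
  fun a₁ _ _ => Or.inl ⟨a₁, (zero_add a₁).symm⟩

theorem IsPrime.mle_or_mle {p x y : G.M} (hp : G.IsPrime p) (h : p = x + y) :
    G.mle p x ∨ G.mle p y :=
  hp x y ⟨0, by rw [add_zero, h]⟩

theorem isPrime_of_forall_ne_zero {q : G.M} (h : ∀ x, x ≠ 0 → G.mle q x) : G.IsPrime q := by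
  intro a₁ a₂ hle
  by_cases h₁ : a₁ = 0
  · rw [h₁, zero_add] at hle
    exact Or.inr hle
  · exact Or.inl (h a₁ h₁)

end RFGraph

namespace exGraph

local notation "𝐚" => RFGraph.av exGraph none
local notation "𝐩" n:max => RFGraph.av exGraph (some n)

/- `exGraph` is not reducible, so `exGraph.V` is not syntactically `Option ℕ`: terms over it are
ascribed to `exGraph.F` explicitly, and `rw`/`simp` are kept away from `Option`-typed subterms. -/
instance : DecidableEq exGraph.Edge := inferInstanceAs (DecidableEq (ℕ × Bool))

theorem toFinset_rowFinite_some (n : ℕ) :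
    (exGraph.rowFinite (some n)).toFinset = {(n, true), (n, false)} := by
  refine exGraph.toFinset_rowFinite_eq_pair fun ⟨m, b⟩ => ?_
  show some m = some n ↔ (m, b) = ((n, true) : ℕ × Bool) ∨ (m, b) = ((n, false) : ℕ × Bool)
  cases b <;> simp

theorem sum_rowFinite_some {A : Type*} [AddCommMonoid A] (f : exGraph.Edge → A) (n : ℕ) :
    ∑ e ∈ (exGraph.rowFinite (some n)).toFinset, f e = f (n, true) + f (n, false) := by
  rw [toFinset_rowFinite_some]
  exact Finset.sum_pair (by intro h; cases h)

theorem rr_some (n : ℕ) :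
    exGraph.rr (some n) =
      (Finsupp.single (some (n + 1)) 1 : exGraph.F) + (Finsupp.single none 1 : exGraph.F) :=
  sum_rowFinite_some _ n

theorem p_eq (n : ℕ) : 𝐩 n = 𝐩 (n + 1) + 𝐚 := by
  rw [exGraph.av_eq_mk'_rr (v := some n) ⟨(n, true), rfl⟩, rr_some, map_add]
  rfl

theorem weight_eq_sum_of_emits {A : Type*} [AddCommMonoid A] (w : exGraph.V → A)
    (hw : ∀ n : ℕ, w (some n) = w (some (n + 1)) + w none) :
    ∀ v, exGraph.emits v → w v = ∑ e ∈ (exGraph.rowFinite v).toFinset, w (exGraph.r e) := by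
  rintro _ ⟨⟨n, b⟩, rfl⟩
  exact (hw n).trans (sum_rowFinite_some (fun e => w (exGraph.r e)) n).symm

noncomputable def pCount : exGraph.M →+ ℕ :=
  RFGraph.weightHom (fun v : Option ℕ => v.elim 0 fun _ => 1) <|
    weight_eq_sum_of_emits _ fun _ => rfl

noncomputable def aWeight : exGraph.M →+ ℤ :=
  RFGraph.weightHom (fun v : Option ℕ => v.elim 1 fun n => -(n : ℤ)) <|
    weight_eq_sum_of_emits _ fun n => by
      show -(n : ℤ) = -((n + 1 : ℕ) : ℤ) + 1
      push_cast
      ring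

@[simp]
theorem pCount_a : pCount 𝐚 = 0 := RFGraph.weightHom_av (G := exGraph) _ _ none

@[simp]
theorem pCount_p (n : ℕ) : pCount (𝐩 n) = 1 := RFGraph.weightHom_av (G := exGraph) _ _ (some n)

@[simp]
theorem aWeight_a : aWeight 𝐚 = 1 := RFGraph.weightHom_av (G := exGraph) _ _ none

@[simp]
theorem aWeight_p (n : ℕ) : aWeight (𝐩 n) = -n :=
  RFGraph.weightHom_av (G := exGraph) _ _ (some n)

theorem eq_nsmul_a_or_eq_p_add (x : exGraph.M) :
    (∃ k : ℕ, x = k • 𝐚) ∨ ∃ n y, x = 𝐩 n + y := by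
  induction x using RFGraph.induction_on with
  | zero => exact Or.inl ⟨0, (zero_nsmul _).symm⟩
  | av_add v x ih =>
    rcases v with _ | n
    · rcases ih with ⟨k, rfl⟩ | ⟨n, y, rfl⟩
      · exact Or.inl ⟨k + 1, (succ_nsmul' _ _).symm⟩
      · exact Or.inr ⟨n, 𝐚 + y, add_left_comm _ _ _⟩
    · exact Or.inr ⟨n, x, rfl⟩

theorem eq_nsmul_a_of_pCount_eq_zero {x : exGraph.M} (h : pCount x = 0) :
    ∃ k : ℕ, x = k • 𝐚 :=
  (eq_nsmul_a_or_eq_p_add x).resolve_right fun ⟨n, y, hx⟩ => by simp [hx] at h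

theorem mle_a_of_ne_zero {x : exGraph.M} (hx : x ≠ 0) : exGraph.mle 𝐚 x := by
  rcases eq_nsmul_a_or_eq_p_add x with ⟨_ | k, rfl⟩ | ⟨n, y, rfl⟩
  · exact absurd (zero_nsmul _) hx
  · exact ⟨k • 𝐚, succ_nsmul' 𝐚 k⟩
  · exact ⟨𝐩 (n + 1) + y, by rw [p_eq]; abel⟩

theorem pCount_le_of_mle {x y : exGraph.M} (h : exGraph.mle x y) : pCount x ≤ pCount y := by
  obtain ⟨z, rfl⟩ := h
  simp

theorem aWeight_le_of_mle {x y : exGraph.M} (h : exGraph.mle x y)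
    (hcount : pCount x = pCount y) : aWeight x ≤ aWeight y := by
  obtain ⟨z, rfl⟩ := h
  obtain ⟨k, rfl⟩ := eq_nsmul_a_of_pCount_eq_zero (by simpa using hcount)
  simp

theorem isPrime_a : exGraph.IsPrime 𝐚 :=
  RFGraph.isPrime_of_forall_ne_zero fun _ => mle_a_of_ne_zero

theorem not_isPrime_nsmul_a (k : ℕ) : ¬ exGraph.IsPrime ((k + 2) • 𝐚) := by
  intro hp
  rcases hp.mle_or_mle (succ_nsmul' 𝐚 (k + 1)) with h | h
  · have := aWeight_le_of_mle h (by simp)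
    simp at this
    omega
  · have := aWeight_le_of_mle h (by simp)
    simp at this

theorem not_isPrime_p_add (n : ℕ) (y : exGraph.M) : ¬ exGraph.IsPrime (𝐩 n + y) := by
  intro hp
  rcases hp.mle_or_mle (show 𝐩 n + y = 𝐩 (n + 1) + y + 𝐚 by rw [p_eq]; abel) with h | h
  · have := aWeight_le_of_mle h (by simp)
    simp at this
  · simpa using pCount_le_of_mle h

theorem isPrime_iff (p : exGraph.M) : exGraph.IsPrime p ↔ p = 0 ∨ p = 𝐚 := by
  refine ⟨fun hp => ?_, ?_⟩
  · rcases eq_nsmul_a_or_eq_p_add p with ⟨_ | _ | k, rfl⟩ | ⟨n, y, rfl⟩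
    · exact Or.inl (zero_nsmul _)
    · exact Or.inr (one_nsmul _)
    · exact absurd hp (not_isPrime_nsmul_a k)
    · exact absurd hp (not_isPrime_p_add n y)
  · rintro (rfl | rfl)
    · exact RFGraph.isPrime_zero
    · exact isPrime_a

end exGraph

/-- The monoid of `exGraph` (generators `a, p₀, p₁, …`, relations
`pₙ = pₙ₊₁ + a`) is not primely generated; its only prime elements are `0` and
the class of `a`. -/
theorem stmt16 :
    (¬ ∀ x : exGraph.M, ∃ l : Multiset exGraph.M,
        (∀ p ∈ l, exGraph.IsPrime p) ∧ l.sum = x) ∧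
    (∀ p : exGraph.M, exGraph.IsPrime p ↔ p = 0 ∨ p = exGraph.av none) := by
  refine ⟨fun h => ?_, exGraph.isPrime_iff⟩
  obtain ⟨l, hl, hsum⟩ := h (exGraph.av (some 0))
  have hcount : exGraph.pCount l.sum = 0 := by
    rw [map_multiset_sum]
    refine Multiset.sum_eq_zero fun c hc => ?_
    obtain ⟨q, hq, rfl⟩ := Multiset.mem_map.mp hc
    rcases (exGraph.isPrime_iff q).mp (hl q hq) with rfl | rfl <;> simp
  simp [hsum] at hcount
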